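/- Let δ ≥ 3, G = K_{δ+1}, and let H be a graph on n vertices where n is not a multiple of δ. Then χ_G(H) + χ_G(complement of H) ≤ ⌈n/δ⌉ + 1. -/

import Mathlib

open SimpleGraph

/-- `H` contains a copy of `G`: an injective map preserving adjacency. -/
def ContainsCopy {α β : Type*} (G : SimpleGraph α) (H : SimpleGraph β) : Prop :=
  ∃ f : α ↪ β, ∀ a b, G.Adj a b → H.Adj (f a) (f b)

/-- `H` is `G`-free. -/
def GFree {α β : Type*} (G : SimpleGraph α) (H : SimpleGraph β) : Prop :=
  ¬ ContainsCopy G H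

/-- The `G`-free chromatic number of `H`. -/
noncomputable def gChrom {α β : Type*} (G : SimpleGraph α) (H : SimpleGraph β) : ℕ :=
  sInf {k | ∃ c : β → Fin k, ∀ i, GFree G (H.induce {v | c v = i})}

/-- `H` is `G`-free `k`-critical. -/
def GFreeCritical {α β : Type*} (G : SimpleGraph α) (H : SimpleGraph β) (k : ℕ) : Prop :=
  gChrom G H = k ∧ ∀ F : H.Subgraph, F ≠ ⊤ → gChrom G F.coe ≤ k - 1

/-! Nordhaus–Gaddum: `χ(H) + χ(Hᶜ) ≤ n + 1`, by deleting a vertex and recolouring it with a colour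
missing from its neighbourhood or with a fresh one; if neither graph has a missing colour, both
degrees are large and the two colourings together used at most `n - 1` colours.
Merging the colour classes of a proper `a`-colouring `δ` at a time leaves `⌈a/δ⌉` classes, each
`δ`-colourable and hence `K_{δ+1}`-free. It remains that `⌈a/δ⌉ + ⌈b/δ⌉ ≤ ⌈n/δ⌉ + 1`
whenever `a + b ≤ n + 1`. -/

theorem Nat.ceil_div_eq_ceilDiv {K : Type*} [Semifield K] [LinearOrder K] [IsStrictOrderedRing K]
    [FloorSemiring K] (n d : ℕ) : ⌈(n / d : K)⌉₊ = n ⌈/⌉ d := by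
  rcases Nat.eq_zero_or_pos d with rfl | hd
  · simp
  have hdK : (0 : K) < d := by exact_mod_cast hd
  apply le_antisymm
  · rw [Nat.ceil_le, div_le_iff₀ hdK]
    exact_mod_cast (le_smul_ceilDiv hd).trans_eq (mul_comm _ _)
  · rw [ceilDiv_le_iff_le_mul hd]
    have := Nat.le_ceil (n / d : K)
    rw [div_le_iff₀ hdK] at this
    exact_mod_cast this.trans_eq (mul_comm _ _)

theorem Nat.ceilDiv_add_ceilDiv_le {a b n d : ℕ} (hd : 0 < d) (h : a + b ≤ n + 1) :
    a ⌈/⌉ d + b ⌈/⌉ d ≤ n ⌈/⌉ d + 1 := by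
  simp only [ceilDiv_eq_add_pred_div]
  calc (a + d - 1) / d + (b + d - 1) / d ≤ (a + d - 1 + (b + d - 1)) / d :=
        Nat.div_add_div_le_add_div
    _ ≤ (n + d - 1 + d) / d := Nat.div_le_div_right (by omega)
    _ = (n + d - 1) / d + 1 := Nat.add_div_right _ hd

namespace SimpleGraph

variable {V α : Type*} {G : SimpleGraph V}

theorem induce_compl (G : SimpleGraph V) (s : Set V) : Gᶜ.induce s = (G.induce s)ᶜ := by
  ext u w
  simp [Subtype.ext_iff]

theorem Coloring.nonempty_of_induce_compl_singleton {v : V} (C : (G.induce {v}ᶜ).Coloring α)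
    (x : α) (hx : ∀ w (hw : w ≠ v), G.Adj v w → C ⟨w, hw⟩ ≠ x) : Nonempty (G.Coloring α) := by
  classical
  refine ⟨Coloring.mk (fun w => if hw : w = v then x else C ⟨w, hw⟩) fun {u w} huw => ?_⟩
  by_cases hu : u = v <;> by_cases hw : w = v <;> simp only [hu, hw, dite_true, dite_false]
  · exact absurd (hu.trans hw.symm) huw.ne
  · subst hu; exact (hx w hw huw).symm
  · subst hw; exact hx u hu huw.symm
  · exact C.valid (v := ⟨u, hu⟩) (w := ⟨w, hw⟩) huw

theorem Colorable.of_induce_compl_singleton {v : V} {n : ℕ} (h : (G.induce {v}ᶜ).Colorable n) :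
    G.Colorable (n + 1) := by
  obtain ⟨C⟩ := h
  obtain ⟨C'⟩ := Coloring.nonempty_of_induce_compl_singleton
    ((Embedding.completeGraph ⟨some, Option.some_injective _⟩).toHom.comp C) none
    fun _ _ _ => Option.some_ne_none _
  simpa using C'.colorable

theorem Coloring.nonempty_of_induce_compl_singleton_of_degree_lt [Fintype α] {v : V}
    [Fintype (G.neighborSet v)] (C : (G.induce {v}ᶜ).Coloring α)
    (hv : G.degree v < Fintype.card α) : Nonempty (G.Coloring α) := by
  obtain ⟨x, hx⟩ : ∃ x, ∀ w (hw : w ≠ v), G.Adj v w → C ⟨w, hw⟩ ≠ x := by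
    by_contra! h
    choose w hw hadj hCw using h
    have hinj : Function.Injective fun x => (⟨w x, hadj x⟩ : G.neighborSet v) := fun x y hxy => by
      have hwxy : w x = w y := congrArg Subtype.val hxy
      rw [← hCw x, ← hCw y]
      exact congrArg C (Subtype.ext hwxy)
    exact hv.not_ge (card_neighborSet_eq_degree G v ▸ Fintype.card_le_of_injective _ hinj)
  exact C.nonempty_of_induce_compl_singleton x hx

theorem exists_colorable_add_colorable_compl_le [Fintype V] (G : SimpleGraph V) :
    ∃ a b, G.Colorable a ∧ Gᶜ.Colorable b ∧ a + b ≤ Fintype.card V + 1 := by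
  classical
  induction h : Fintype.card V generalizing V with
  | zero =>
    have := Fintype.card_eq_zero_iff.mp h
    exact ⟨0, 0, .of_isEmpty 0, .of_isEmpty 0, zero_le_one⟩
  | succ n ih =>
    obtain ⟨v⟩ : Nonempty V := Fintype.card_pos_iff.mp (by omega)
    have hcard : Fintype.card ({v}ᶜ : Set V) = n := by
      rw [Fintype.card_compl_set, Set.card_singleton, h]
      rfl
    obtain ⟨a, b, ⟨C⟩, ⟨D⟩, hab⟩ := ih (G.induce {v}ᶜ) hcard
    rw [← induce_compl] at D
    by_cases ha : G.degree v < a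
    · exact ⟨a, b + 1, C.nonempty_of_induce_compl_singleton_of_degree_lt (by simpa using ha),
        Colorable.of_induce_compl_singleton ⟨D⟩, by omega⟩
    by_cases hb : Gᶜ.degree v < b
    · exact ⟨a + 1, b, Colorable.of_induce_compl_singleton ⟨C⟩,
        D.nonempty_of_induce_compl_singleton_of_degree_lt (by simpa using hb), by omega⟩
    have hdeg_compl := G.degree_compl v
    have hdeg_lt := G.degree_lt_card_verts v
    exact ⟨a + 1, b + 1, Colorable.of_induce_compl_singleton ⟨C⟩,
      Colorable.of_induce_compl_singleton ⟨D⟩, by omega⟩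

end SimpleGraph

theorem containsCopy_iff_isContained {α β : Type*} {G : SimpleGraph α} {H : SimpleGraph β} :
    ContainsCopy G H ↔ G ⊑ H :=
  ⟨fun ⟨f, hf⟩ => ⟨⟨⟨f, hf _ _⟩, f.injective⟩⟩,
    fun ⟨c⟩ => ⟨⟨c, c.injective⟩, fun _ _ => c.toHom.map_adj⟩⟩

theorem gFree_completeGraph_iff_cliqueFree {β : Type*} {H : SimpleGraph β} {m : ℕ} :
    GFree (completeGraph (Fin m)) H ↔ H.CliqueFree m := by
  rw [GFree, containsCopy_iff_isContained, ← not_cliqueFree_iff_top_isContained, not_not]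

theorem gChrom_le {α β : Type*} {G : SimpleGraph α} {H : SimpleGraph β} {k : ℕ}
    (c : β → Fin k) (hc : ∀ i, GFree G (H.induce {v | c v = i})) : gChrom G H ≤ k :=
  Nat.sInf_le ⟨c, hc⟩

theorem gChrom_completeGraph_le_ceilDiv {β : Type*} {H : SimpleGraph β} {δ a : ℕ} (hδ : 0 < δ)
    (h : H.Colorable a) : gChrom (completeGraph (Fin (δ + 1))) H ≤ a ⌈/⌉ δ := by
  obtain ⟨C⟩ := h
  have hlt (v : β) : (C v : ℕ) / δ < a ⌈/⌉ δ := by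
    rw [Nat.div_lt_iff_lt_mul hδ, mul_comm]
    exact (C v).2.trans_le (le_smul_ceilDiv hδ)
  refine gChrom_le (fun v => ⟨C v / δ, hlt v⟩) fun i => ?_
  rw [gFree_completeGraph_iff_cliqueFree]
  refine Colorable.cliqueFree ?_ (Nat.lt_succ_self δ)
  refine ⟨Coloring.mk (fun v => ⟨C v % δ, Nat.mod_lt _ hδ⟩) fun {u w} huw hmod => C.valid huw ?_⟩
  have hdiv : (C u : ℕ) / δ = (C w : ℕ) / δ := congrArg Fin.val (u.2.trans w.2.symm)
  exact Fin.ext (Nat.ext_div_mod hdiv (congrArg Fin.val hmod))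

theorem stmt8_general {β : Type*} [Fintype β] (δ : ℕ) (hδ : 3 ≤ δ)
    (H : SimpleGraph β) (n : ℕ) (hn : Fintype.card β = n) :
    gChrom (completeGraph (Fin (δ + 1))) H + gChrom (completeGraph (Fin (δ + 1))) Hᶜ ≤
      ⌈((n : ℚ) / (δ : ℚ))⌉₊ + 1 := by
  obtain ⟨a, b, ha, hb, hab⟩ := H.exists_colorable_add_colorable_compl_le
  have hδ₀ : 0 < δ := by omega
  calc _ ≤ a ⌈/⌉ δ + b ⌈/⌉ δ :=
        add_le_add (gChrom_completeGraph_le_ceilDiv hδ₀ ha) (gChrom_completeGraph_le_ceilDiv hδ₀ hb)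
    _ ≤ n ⌈/⌉ δ + 1 := Nat.ceilDiv_add_ceilDiv_le hδ₀ (hn ▸ hab)
    _ = _ := by rw [Nat.ceil_div_eq_ceilDiv]

theorem stmt8 {β : Type*} [Fintype β] (δ : ℕ) (hδ : 3 ≤ δ)
    (H : SimpleGraph β) (n : ℕ) (hn : Fintype.card β = n) (hnd : ¬ δ ∣ n) :
    gChrom (completeGraph (Fin (δ + 1))) H + gChrom (completeGraph (Fin (δ + 1))) Hᶜ ≤
      ⌈((n : ℚ) / (δ : ℚ))⌉₊ + 1 :=
  stmt8_general δ hδ H n hn
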